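/- Let u, v be distinguished (minimal-length) coset representatives of W/W_m, where W_m ⊂ W is generated by {s_j : j ≠ m}. If the e-cores λ = u∅_m and μ = v∅_m satisfy λ ⊆ μ, then u ≤ v in Bruhat order. -/

import Mathlib

/-- A partition: a weakly decreasing, eventually zero sequence of naturals. -/
structure CorePartition where
  parts : ℕ → ℕ
  antitone : ∀ k, parts (k + 1) ≤ parts k
  eventually_zero : ∃ N, ∀ k, N ≤ k → parts k = 0

/-- A partition is `e`-restricted if consecutive parts differ by less than `e`. -/
def eRestricted (e : ℕ) (l : CorePartition) : Prop :=
  ∀ k, l.parts k < l.parts (k + 1) + e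

/-- The set of beta numbers of charge `m` of a partition. -/
def betaSet (l : CorePartition) (m : ℤ) : Set ℤ :=
  {x | ∃ k : ℕ, x = (l.parts k : ℤ) + m - k}

/-- `U(J)`: the beads that can be slid up by one on their runner. -/
def USet (e : ℕ) (J : Set ℤ) : Set ℤ :=
  {x | x ∈ J ∧ x - (e : ℤ) ∉ J}

/-- Row `a` (0-indexed) of `l` admits an addable node at its end. -/
def addableRow (l : CorePartition) (a : ℕ) : Prop :=
  a = 0 ∨ l.parts a < l.parts (a - 1)

/-- Row `a` (0-indexed) of `l` has a removable node at its end. -/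
def removableRow (l : CorePartition) (a : ℕ) : Prop :=
  l.parts (a + 1) < l.parts a

/-- The set of rows of `l` carrying an addable node of residue `i`
(the node at row `a`, column `l.parts a`, 0-indexed, has residue
`m + l.parts a - a` modulo `e`). -/
def AddRows (e : ℕ) (m : ℤ) (i : ZMod e) (l : CorePartition) : Set ℕ :=
  {a | addableRow l a ∧ ((m + (l.parts a : ℤ) - (a : ℤ) : ℤ) : ZMod e) = i}

/-- The set of rows of `l` carrying a removable node of residue `i`. -/
def RemRows (e : ℕ) (m : ℤ) (i : ZMod e) (l : CorePartition) : Set ℕ :=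
  {a | removableRow l a ∧ ((m + (l.parts a : ℤ) - 1 - (a : ℤ) : ℤ) : ZMod e) = i}

/-- The Coxeter matrix of affine type `A_{e-1}^{(1)}` on vertex set `ℤ/eℤ`:
neighbouring simple reflections braid (order 3), non-neighbouring ones commute;
for `e = 2` the two simple reflections generate an infinite dihedral group
(entry `0`, meaning infinite order). -/
def affineA (e : ℕ) : CoxeterMatrix (ZMod e) where
  M := fun i j =>
    if i = j then 1
    else if j = i + 1 ∨ i = j + 1 then (if e = 2 then 0 else 3) else 2
  isSymm := by
    ext i j
    change (if j = i then 1 else if i = j + 1 ∨ j = i + 1 then (if e = 2 then 0 else 3) else 2) = (if i = j then 1 else if j = i + 1 ∨ i = j + 1 then (if e = 2 then 0 else 3) else 2)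
    rcases eq_or_ne i j with h | h
    · subst h; rfl
    · rw [if_neg h, if_neg (Ne.symm h)]
      exact if_congr or_comm rfl rfl
  diagonal := fun i => by simp
  off_diagonal := fun i j h => by
    show (if i = j then 1 else if j = i + 1 ∨ i = j + 1 then (if e = 2 then 0 else 3) else 2) ≠ 1
    rw [if_neg h]
    split_ifs <;> omega

/-- The Coxeter system of affine type `A_{e-1}^{(1)}`. -/
def affineACS (e : ℕ) : CoxeterSystem (affineA e) (affineA e).Group :=
  (affineA e).toCoxeterSystem

/-- Bruhat–Chevalley order on the affine Weyl group, via the subword property: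
`u ≤ v` iff some (equivalently, any) reduced word for `v` contains a subword
whose product is `u`. -/
def BruhatLE (e : ℕ) (u v : (affineA e).Group) : Prop :=
  ∃ w : List (ZMod e), (affineACS e).wordProd w = v ∧
    w.length = (affineACS e).length v ∧
    ∃ w' : List (ZMod e), w'.Sublist w ∧ (affineACS e).wordProd w' = u

/-- The action of the simple reflection `s_i` on an `e`-core:
remove all removable `i`-nodes if there are any, otherwise add all addable
`i`-nodes. -/
def siAct (e : ℕ) (m : ℤ) (i : ZMod e) (l l' : CorePartition) : Prop :=
  (RemRows e m i l = ∅ →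
    ∀ a, (a ∈ AddRows e m i l → l'.parts a = l.parts a + 1) ∧
         (a ∉ AddRows e m i l → l'.parts a = l.parts a)) ∧
  (RemRows e m i l ≠ ∅ →
    ∀ a, (a ∈ RemRows e m i l → l'.parts a = l.parts a - 1) ∧
         (a ∉ RemRows e m i l → l'.parts a = l.parts a))

/-- `Applies e m w l l'` : applying the word `w = s_{i_1} ⋯ s_{i_r}`
(rightmost letter first) to the partition `l` yields `l'`. -/
def Applies (e : ℕ) (m : ℤ) : List (ZMod e) → CorePartition → CorePartition → Prop
  | [], l, l' => l' = l
  | (i :: w), l, l' => ∃ l'', Applies e m w l l'' ∧ siAct e m i l'' l'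

/-- The empty partition. -/
def emptyPartition : CorePartition := ⟨fun _ => 0, fun _ => le_rfl, ⟨0, fun _ _ => rfl⟩⟩

/-- `u` is a distinguished (minimal length) coset representative of `W/W_m`,
where `W_m` is the standard parabolic subgroup generated by the simple
reflections `s_j`, `j ≠ m`. -/
def IsDistinguished (e : ℕ) (m : ℤ) (u : (affineA e).Group) : Prop :=
  ∀ x ∈ Subgroup.closure {g : (affineA e).Group |
      ∃ j : ZMod e, j ≠ (m : ZMod e) ∧ g = (affineA e).simple j},
    (affineACS e).length u ≤ (affineACS e).length (u * x)

namespace Prop44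

open CoxeterSystem List

variable {e : ℕ}

/-- The function underlying the permutation `σ_i` of `ℤ`. -/
def sigFun (e : ℕ) (i : ZMod e) (x : ℤ) : ℤ :=
  if (x : ZMod e) = i then x + 1 else if (x : ZMod e) = i + 1 then x - 1 else x

lemma zmod_one_ne_zero (he : 2 ≤ e) : (1 : ZMod e) ≠ 0 := by
  haveI : Fact (1 < e) := ⟨by omega⟩
  exact one_ne_zero

lemma zmod_add_one_ne (he : 2 ≤ e) (i : ZMod e) : i + 1 ≠ i := by
  intro h
  have : (1 : ZMod e) = 0 := by
    have := congrArg (· - i) h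
    simpa [add_comm, add_sub_cancel_right] using this
  exact zmod_one_ne_zero he this

lemma sigFun_invol (he : 2 ≤ e) (i : ZMod e) : Function.Involutive (sigFun e i) := by
  intro x
  unfold sigFun
  by_cases h1 : (x : ZMod e) = i
  · rw [if_pos h1]
    have hx1 : ((x + 1 : ℤ) : ZMod e) = i + 1 := by push_cast [h1]; ring
    rw [if_neg (by rw [hx1]; exact fun h => zmod_add_one_ne he i h), if_pos hx1]
    ring
  · rw [if_neg h1]
    by_cases h2 : (x : ZMod e) = i + 1
    · rw [if_pos h2]
      have hx1 : ((x - 1 : ℤ) : ZMod e) = i := by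
        push_cast [h2]; ring
      rw [if_pos hx1]; ring
    · rw [if_neg h2, if_neg h1, if_neg h2]

/-- The permutation `σ_i` of `ℤ`: swaps `x ↔ x+1` whenever `x ≡ i (mod e)`. -/
def sig (he : 2 ≤ e) (i : ZMod e) : Equiv.Perm ℤ :=
  Function.Involutive.toPerm _ (sigFun_invol he i)

lemma sig_apply (he : 2 ≤ e) (i : ZMod e) (x : ℤ) :
    sig he i x = if (x : ZMod e) = i then x + 1 else if (x : ZMod e) = i + 1 then x - 1 else x :=
  rfl

lemma sig_apply_of_eq (he : 2 ≤ e) {i : ZMod e} {x : ℤ} (h : (x : ZMod e) = i) :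
    sig he i x = x + 1 := by rw [sig_apply, if_pos h]

lemma sig_apply_of_eq_add_one (he : 2 ≤ e) {i : ZMod e} {x : ℤ} (h : (x : ZMod e) = i + 1) :
    sig he i x = x - 1 := by
  rw [sig_apply, if_neg, if_pos h]
  rw [h]; exact zmod_add_one_ne he i

lemma sig_apply_of_ne (he : 2 ≤ e) {i : ZMod e} {x : ℤ} (h1 : (x : ZMod e) ≠ i)
    (h2 : (x : ZMod e) ≠ i + 1) : sig he i x = x := by
  rw [sig_apply, if_neg h1, if_neg h2]

lemma sig_sq (he : 2 ≤ e) (i : ZMod e) : sig he i * sig he i = 1 := by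
  ext x
  exact (sigFun_invol he i) x

end Prop44
namespace Prop44

open CoxeterSystem List

variable {e : ℕ}

lemma zmod_two_ne_zero (he : 2 ≤ e) (hne : e ≠ 2) : (2 : ZMod e) ≠ 0 := by
  have h2 : ((2 : ℕ) : ZMod e) = (2 : ZMod e) := by push_cast; ring
  rw [← h2, Ne, ZMod.natCast_eq_zero_iff]
  intro h
  have := Nat.le_of_dvd (by norm_num) h
  omega

lemma zmod21 (he : 2 ≤ e) (hne : e ≠ 2) : (2 : ZMod e) ≠ 1 := by
  intro h
  apply zmod_one_ne_zero he
  have h' : (1 : ZMod e) + 1 = 1 + 0 := by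
    rw [show (1 : ZMod e) + 1 = 2 by ring, h]; ring
  exact add_left_cancel h'

/-- The explicit form of `σ_i σ_{i+1}`. -/
private def Tmap (e : ℕ) (i : ZMod e) (x : ℤ) : ℤ :=
  if (x : ZMod e) = i then x + 1 else if (x : ZMod e) = i + 1 then x + 1
    else if (x : ZMod e) = i + 2 then x - 2 else x

lemma add_one_ne (he : 2 ≤ e) (i : ZMod e) : i + 1 ≠ i := by
  intro h
  apply zmod_one_ne_zero he
  nth_rewrite 2 [← add_zero i] at h
  exact add_left_cancel h

lemma add_two_ne (he : 2 ≤ e) (hne : e ≠ 2) (i : ZMod e) : i + 2 ≠ i := by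
  intro h
  apply zmod_two_ne_zero he hne
  nth_rewrite 2 [← add_zero i] at h
  exact add_left_cancel h

lemma add_two_ne_add_one (he : 2 ≤ e) (hne : e ≠ 2) (i : ZMod e) : i + 2 ≠ i + 1 :=
  fun h => zmod21 he hne (add_left_cancel h)

private lemma Tmap_eq1 {i : ZMod e} {x : ℤ} (h : (x : ZMod e) = i) : Tmap e i x = x + 1 := by
  unfold Tmap; rw [if_pos h]

private lemma Tmap_eq2 (he : 2 ≤ e) {i : ZMod e} {x : ℤ} (h : (x : ZMod e) = i + 1) :
    Tmap e i x = x + 1 := by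
  unfold Tmap
  rw [if_neg (fun hh => add_one_ne he i (h.symm.trans hh)), if_pos h]

private lemma Tmap_eq3 (he : 2 ≤ e) (hne : e ≠ 2) {i : ZMod e} {x : ℤ}
    (h : (x : ZMod e) = i + 2) : Tmap e i x = x - 2 := by
  unfold Tmap
  rw [if_neg (fun hh => add_two_ne he hne i (h.symm.trans hh)),
    if_neg (fun hh => add_two_ne_add_one he hne i (h.symm.trans hh)), if_pos h]

private lemma Tmap_eq4 {i : ZMod e} {x : ℤ} (h1 : (x : ZMod e) ≠ i) (h2 : (x : ZMod e) ≠ i + 1)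
    (h3 : (x : ZMod e) ≠ i + 2) : Tmap e i x = x := by
  unfold Tmap; rw [if_neg h1, if_neg h2, if_neg h3]

lemma sig_mul_eq_Tmap (he : 2 ≤ e) (hne : e ≠ 2) (i : ZMod e) :
    ∀ x : ℤ, (sig he i * sig he (i + 1)) x = Tmap e i x := by
  have n10 : (1 : ZMod e) ≠ 0 := zmod_one_ne_zero he
  have h1i : i + 1 ≠ i := by
    intro h; apply n10; nth_rewrite 2 [← add_zero i] at h; exact add_left_cancel h
  have hi1 : i ≠ i + 1 := fun h => h1i h.symm
  have h2i : i + 2 ≠ i := by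
    intro h; apply zmod_two_ne_zero he hne
    nth_rewrite 2 [← add_zero i] at h; exact add_left_cancel h
  have hi2 : i ≠ i + 2 := fun h => h2i h.symm
  have h21 : i + 2 ≠ i + 1 := fun h => zmod21 he hne (add_left_cancel h)
  have h112 : i + 1 + 1 = i + 2 := by ring
  intro x
  have hx : (sig he i * sig he (i+1)) x = sig he i (sig he (i+1) x) := rfl
  by_cases c1 : (x : ZMod e) = i
  · have e1 : sig he (i+1) x = x := by
      apply sig_apply_of_ne he
      · rw [c1]; exact hi1
      · rw [c1, h112]; exact hi2
    rw [hx, e1, sig_apply_of_eq he c1, Tmap_eq1 c1]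
  · by_cases c2 : (x : ZMod e) = i + 1
    · have e1 : sig he (i+1) x = x + 1 := sig_apply_of_eq he c2
      have d1 : ((x + 1 : ℤ) : ZMod e) = i + 2 := by push_cast [c2]; ring
      have e2 : sig he i (x + 1) = x + 1 := by
        apply sig_apply_of_ne he
        · rw [d1]; exact h2i
        · rw [d1]; exact h21
      rw [hx, e1, e2, Tmap_eq2 he c2]
    · by_cases c3 : (x : ZMod e) = i + 2
      · have e1 : sig he (i+1) x = x - 1 := by
          apply sig_apply_of_eq_add_one he
          rw [c3, h112]
        have d1 : ((x - 1 : ℤ) : ZMod e) = i + 1 := by push_cast [c3]; ring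
        have e2 : sig he i (x - 1) = x - 2 := by
          rw [sig_apply_of_eq_add_one he d1]; ring
        rw [hx, e1, e2, Tmap_eq3 he hne c3]
      · have e1 : sig he (i+1) x = x := by
          apply sig_apply_of_ne he
          · exact c2
          · rw [h112]; exact c3
        have e2 : sig he i x = x := sig_apply_of_ne he c1 c2
        rw [hx, e1, e2, Tmap_eq4 c1 c2 c3]

lemma braid3 (he : 2 ≤ e) (hne : e ≠ 2) (i : ZMod e) :
    (sig he i * sig he (i + 1)) ^ 3 = 1 := by
  have n10 : (1 : ZMod e) ≠ 0 := zmod_one_ne_zero he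
  have h1i : i + 1 ≠ i := by
    intro h; apply n10; nth_rewrite 2 [← add_zero i] at h; exact add_left_cancel h
  have h2i : i + 2 ≠ i := by
    intro h; apply zmod_two_ne_zero he hne
    nth_rewrite 2 [← add_zero i] at h; exact add_left_cancel h
  have h21 : i + 2 ≠ i + 1 := fun h => zmod21 he hne (add_left_cancel h)
  have key : ∀ x : ℤ, Tmap e i (Tmap e i (Tmap e i x)) = x := by
    intro x
    by_cases c1 : (x : ZMod e) = i
    · have d1 : ((x + 1 : ℤ) : ZMod e) = i + 1 := by push_cast [c1]; ring
      have d2 : ((x + 1 + 1 : ℤ) : ZMod e) = i + 2 := by push_cast [c1]; ring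
      rw [Tmap_eq1 c1, Tmap_eq2 he d1, Tmap_eq3 he hne d2]
      ring
    · by_cases c2 : (x : ZMod e) = i + 1
      · have d1 : ((x + 1 : ℤ) : ZMod e) = i + 2 := by push_cast [c2]; ring
        have d2 : ((x + 1 - 2 : ℤ) : ZMod e) = i := by push_cast [c2]; ring
        rw [Tmap_eq2 he c2, Tmap_eq3 he hne d1, Tmap_eq1 d2]
        ring
      · by_cases c3 : (x : ZMod e) = i + 2
        · have d1 : ((x - 2 : ℤ) : ZMod e) = i := by push_cast [c3]; ring
          have d2 : ((x - 2 + 1 : ℤ) : ZMod e) = i + 1 := by push_cast [c3]; ring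
          rw [Tmap_eq3 he hne c3, Tmap_eq1 d1, Tmap_eq2 he d2]
          ring
        · rw [Tmap_eq4 c1 c2 c3, Tmap_eq4 c1 c2 c3, Tmap_eq4 c1 c2 c3]
  ext x
  have pow3 : ((sig he i * sig he (i+1)) ^ 3) x
      = (sig he i * sig he (i+1)) ((sig he i * sig he (i+1)) ((sig he i * sig he (i+1)) x)) := by
    rw [pow_succ, pow_succ, pow_one]
    rfl
  rw [pow3, sig_mul_eq_Tmap he hne, sig_mul_eq_Tmap he hne, sig_mul_eq_Tmap he hne, key x,
    Equiv.Perm.one_apply]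

lemma sig_comm (he : 2 ≤ e) {i j : ZMod e} (hij : i ≠ j) (h1 : j ≠ i + 1) (h2 : i ≠ j + 1) :
    sig he i * sig he j = sig he j * sig he i := by
  have key : ∀ (a b : ZMod e), a ≠ b → b ≠ a + 1 → a ≠ b + 1 →
      ∀ x : ℤ, (x : ZMod e) = a → sig he b x = x ∧ sig he b (x + 1) = x + 1 := by
    intro a b hab h1' h2' x hx
    have sb : sig he b x = x := by
      apply sig_apply_of_ne he
      · rw [hx]; exact hab
      · rw [hx]; exact h2'
    have d1 : ((x + 1 : ℤ) : ZMod e) = a + 1 := by push_cast [hx]; ring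
    have sb1 : sig he b (x + 1) = x + 1 := by
      apply sig_apply_of_ne he
      · rw [d1]; exact fun h => h1' h.symm
      · rw [d1]; intro h; exact hab (add_right_cancel h)
    exact ⟨sb, sb1⟩
  have key2 : ∀ (a b : ZMod e), a ≠ b → b ≠ a + 1 → a ≠ b + 1 →
      ∀ x : ℤ, (x : ZMod e) = a + 1 → sig he b x = x ∧ sig he b (x - 1) = x - 1 := by
    intro a b hab h1' h2' x hx
    have sb : sig he b x = x := by
      apply sig_apply_of_ne he
      · rw [hx]; exact fun h => h1' h.symm
      · rw [hx]; intro h; exact hab (add_right_cancel h)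
    have d1 : ((x - 1 : ℤ) : ZMod e) = a := by push_cast [hx]; ring
    have sb1 : sig he b (x - 1) = x - 1 := by
      apply sig_apply_of_ne he
      · rw [d1]; exact hab
      · rw [d1]; exact h2'
    exact ⟨sb, sb1⟩
  ext x
  have hx1 : (sig he i * sig he j) x = sig he i (sig he j x) := rfl
  have hx2 : (sig he j * sig he i) x = sig he j (sig he i x) := rfl
  rw [hx1, hx2]
  by_cases c1 : (x : ZMod e) = i
  · obtain ⟨k2, k3⟩ := key i j hij h1 h2 x c1
    rw [k2, sig_apply_of_eq he c1, k3]
  · by_cases c2 : (x : ZMod e) = i + 1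
    · obtain ⟨k2, k3⟩ := key2 i j hij h1 h2 x c2
      rw [k2, sig_apply_of_eq_add_one he c2, k3]
    · by_cases c3 : (x : ZMod e) = j
      · obtain ⟨k2, k3⟩ := key j i hij.symm h2 h1 x c3
        rw [sig_apply_of_eq he c3, k3, k2, sig_apply_of_eq he c3]
      · by_cases c4 : (x : ZMod e) = j + 1
        · obtain ⟨k2, k3⟩ := key2 j i hij.symm h2 h1 x c4
          rw [sig_apply_of_eq_add_one he c4, k3, k2, sig_apply_of_eq_add_one he c4]
        · rw [sig_apply_of_ne he c3 c4, sig_apply_of_ne he c1 c2, sig_apply_of_ne he c3 c4]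

end Prop44
namespace Prop44

open CoxeterSystem List

variable {e : ℕ}

lemma affineA_apply (e : ℕ) (i j : ZMod e) : (affineA e) i j =
    if i = j then 1 else if j = i + 1 ∨ i = j + 1 then (if e = 2 then 0 else 3) else 2 := rfl

lemma sig_inv (he : 2 ≤ e) (i : ZMod e) : (sig he i)⁻¹ = sig he i :=
  inv_eq_of_mul_eq_one_left (sig_sq he i)

lemma sig_liftable (he : 2 ≤ e) : CoxeterMatrix.IsLiftable (affineA e) (fun i => sig he i) := by
  intro i j
  rw [affineA_apply]
  by_cases hij : i = j
  · rw [if_pos hij, pow_one, hij, sig_sq]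
  · rw [if_neg hij]
    by_cases hadj : j = i + 1 ∨ i = j + 1
    · rw [if_pos hadj]
      by_cases he2 : e = 2
      · rw [if_pos he2, pow_zero]
      · rw [if_neg he2]
        rcases hadj with h | h
        · rw [h]; exact braid3 he he2 i
        · have hb := braid3 he he2 j
          rw [h]
          have conj : (sig he (j+1) * sig he j) ^ 3
              = sig he (j+1) * ((sig he j * sig he (j+1)) ^ 2) * sig he j := by
            simp [pow_succ, pow_zero, one_mul, mul_assoc]
          have hb2 : (sig he j * sig he (j+1)) ^ 2
              = (sig he j * sig he (j+1)) ^ 3 * (sig he j * sig he (j+1))⁻¹ := by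
            rw [eq_mul_inv_iff_mul_eq, ← pow_succ]
          rw [conj, hb2, hb, one_mul, mul_inv_rev, sig_inv, sig_inv]
          simp [mul_assoc, sig_sq he]
    · rw [if_neg hadj]
      push_neg at hadj
      obtain ⟨h1, h2⟩ := hadj
      have comm := sig_comm he hij h1 h2
      have expand : (sig he i * sig he j) ^ 2 = sig he i * ((sig he j * sig he i) * sig he j) := by
        simp [pow_succ, pow_zero, one_mul, mul_assoc]
      rw [expand, ← comm]
      simp [mul_assoc, sig_sq he]

/-- The permutation representation of the affine Weyl group on `ℤ`. -/
def rho (he : 2 ≤ e) : (affineA e).Group →* Equiv.Perm ℤ :=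
  (affineACS e).lift ⟨fun i => sig he i, sig_liftable he⟩

lemma rho_simple (he : 2 ≤ e) (i : ZMod e) :
    rho he ((affineACS e).simple i) = sig he i :=
  (affineACS e).lift_apply_simple (sig_liftable he) i

/-- `π` commutes with translation by `e`. -/
def IsAff (e : ℕ) (π : Equiv.Perm ℤ) : Prop := ∀ x : ℤ, π (x + e) = π x + e

lemma isAff_sig (he : 2 ≤ e) (i : ZMod e) : IsAff e (sig he i) := by
  intro x
  have hc : ((x + e : ℤ) : ZMod e) = (x : ZMod e) := by
    push_cast
    simp [ZMod.natCast_self]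
  rw [sig_apply he i (x + e), sig_apply he i x, hc]
  split_ifs <;> ring

lemma isAff_mul {π τ : Equiv.Perm ℤ} (hπ : IsAff e π) (hτ : IsAff e τ) : IsAff e (π * τ) := by
  intro x
  have : (π * τ) (x + e) = π (τ (x + e)) := rfl
  rw [this, hτ x, hπ (τ x)]
  rfl

lemma isAff_one : IsAff e (1 : Equiv.Perm ℤ) := fun x => rfl

lemma isAff_rho (he : 2 ≤ e) (g : (affineA e).Group) : IsAff e (rho he g) := by
  induction g using (affineACS e).simple_induction with
  | simple i => rw [rho_simple]; exact isAff_sig he i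
  | one => rw [map_one]; exact isAff_one
  | mul w₁ w₂ h₁ h₂ => rw [map_mul]; exact isAff_mul h₁ h₂

lemma isAff_inv {π : Equiv.Perm ℤ} (hπ : IsAff e π) : IsAff e π⁻¹ := by
  intro x
  apply π.injective
  have h1 : π (π⁻¹ (x + e)) = x + e := π.apply_symm_apply _
  have h2 : π (π⁻¹ x + e) = π (π⁻¹ x) + e := hπ _
  rw [h1, h2, show π (π⁻¹ x) = x from π.apply_symm_apply x]

lemma isAff_zsmul {π : Equiv.Perm ℤ} (hπ : IsAff e π) (k : ℤ) (x : ℤ) :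
    π (x + k * e) = π x + k * e := by
  induction k using Int.induction_on with
  | zero => simp
  | succ n ih =>
      have : x + (n + 1) * e = (x + n * e) + e := by ring
      rw [this, hπ, ih]
      ring
  | pred n ih =>
      have hx : (x + (-n - 1) * e) + e = x + (-n) * e := by ring
      have := hπ (x + (-n - 1) * e)
      rw [hx, ih] at this
      omega

end Prop44
namespace Prop44

open CoxeterSystem List

variable {e : ℕ}

lemma zmod2_succ : ∀ i j : ZMod 2, i ≠ j → j = i + 1 := by decide

lemma zmod2_two : (2 : ZMod 2) = 0 := by decide

lemma zmod2_neg_one : (-1 : ZMod 2) = 1 := by decide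

lemma zmod2_all : ∀ a b : ZMod 2, a = b ∨ a = b + 1 := by decide

lemma int_mono_of_steps {f : ℤ → ℤ} (h : ∀ x, f x < f (x + 1)) :
    ∀ x y : ℤ, x < y → f x < f y := by
  have key : ∀ (n : ℕ) (x : ℤ), f x < f (x + (n + 1)) := by
    intro n
    induction n with
    | zero => intro x; simpa using h x
    | succ n ih =>
        intro x
        have h1 := ih x
        have h2 := h (x + (n + 1))
        have : x + (n + 1) + 1 = x + ((n : ℤ) + 1 + 1) := by ring
        rw [this] at h2
        calc f x < f (x + (n + 1)) := h1
          _ < f (x + ((n : ℤ) + 1 + 1)) := h2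
          _ = f (x + ((n + 1 : ℕ) + 1)) := by norm_cast
  intro x y hxy
  obtain ⟨n, hn⟩ : ∃ n : ℕ, y = x + (n + 1) := by
    refine ⟨(y - x - 1).toNat, ?_⟩
    have : ((y - x - 1).toNat : ℤ) = y - x - 1 := Int.toNat_of_nonneg (by omega)
    omega
  rw [hn]
  exact key _ x

section Pos

variable (he : 2 ≤ e)

/-- Humphreys-style positivity: if `w s_i` goes up in length, then
`w` preserves the order of the pair `(z, z+1)` for `z ≡ i`. -/
theorem pos_of_ascent (he : 2 ≤ e) :
    ∀ (w : (affineA e).Group) (i : ZMod e),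
      (affineACS e).length w < (affineACS e).length (w * (affineACS e).simple i) →
      ∀ z : ℤ, (z : ZMod e) = i → rho he w z < rho he w (z + 1) := by
  suffices H : ∀ (n : ℕ) (w : (affineA e).Group) (i : ZMod e), (affineACS e).length w = n →
      (affineACS e).length w < (affineACS e).length (w * (affineACS e).simple i) →
      ∀ z : ℤ, (z : ZMod e) = i → rho he w z < rho he w (z + 1) by
    intro w i h z hz
    exact H _ w i rfl h z hz
  intro n
  induction n using Nat.strong_induction_on with
  | _ n IH =>
  intro w i hlw hasc z hz
  by_cases hw1 : w = 1
  · subst hw1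
    simp only [map_one, Equiv.Perm.one_apply]
    omega
  -- pick a right descent j
  obtain ⟨j, hj⟩ := (affineACS e).exists_rightDescent_of_ne_one hw1
  have hji : j ≠ i := by
    intro h
    rw [h] at hj
    unfold CoxeterSystem.IsRightDescent at hj
    omega
  -- the alternating descending chain
  set cs := affineACS e with hcs
  set letter : ℕ → ZMod e := fun t => if t % 2 = 0 then j else i with hletter
  set myword : ℕ → List (ZMod e) := fun k => (List.range k).map letter with hmyword
  have myword_succ : ∀ k, myword (k + 1) = myword k ++ [letter k] := by
    intro k
    simp [hmyword, List.range_succ]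
  set g : ℕ → (affineA e).Group := fun k => w * cs.wordProd (myword k) with hg
  have g0 : g 0 = w := by simp [hg, hmyword]
  have gsucc : ∀ k, g (k + 1) = g k * cs.simple (letter k) := by
    intro k
    simp only [hg, myword_succ, cs.wordProd_append, cs.wordProd_singleton, mul_assoc]
  have exQ : ∃ k, ¬ (cs.length (g (k+1)) < cs.length (g k)) := by
    by_contra hq
    push_neg at hq
    have mono : ∀ k, cs.length (g k) + k ≤ cs.length w := by
      intro k
      induction k with
      | zero => rw [g0]; omega
      | succ k ih =>
          have := hq k
          omega
    have := mono (cs.length w + 1)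
    omega
  set K := Nat.find exQ with hK
  have hKspec : ¬ (cs.length (g (K+1)) < cs.length (g K)) := Nat.find_spec exQ
  have hKmin : ∀ l, l < K → cs.length (g (l+1)) < cs.length (g l) := by
    intro l hl
    have := Nat.find_min exQ hl
    push_neg at this
    omega
  have hK1 : 1 ≤ K := by
    rcases Nat.eq_zero_or_pos K with h0 | h1
    · exfalso
      apply hKspec
      rw [h0, gsucc 0, g0]
      have : letter 0 = j := by simp [hletter]
      rw [this]
      exact hj
    · exact h1
  -- exact lengths along the chain
  have steps : ∀ l, l < K → cs.length (g (l+1)) + 1 = cs.length (g l) := by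
    intro l hl
    have hlt := hKmin l hl
    rcases cs.length_mul_simple (g l) (letter l) with h | h
    · rw [gsucc l] at hlt; omega
    · rw [gsucc l] at hlt ⊢; omega
  have lenchain : ∀ k, k ≤ K → cs.length (g k) + k = cs.length w := by
    intro k
    induction k with
    | zero => intro _; simp [g0]
    | succ k ih =>
        intro hk
        have h1 := steps k (by omega)
        have h2 := ih (by omega)
        omega
  have lenK : cs.length (g K) + K = cs.length w := lenchain K le_rfl
  -- both ascents at g K
  have ascK : cs.length (g K) < cs.length (g K * cs.simple (letter K)) := by
    rcases cs.length_mul_simple (g K) (letter K) with h | h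
    · omega
    · exfalso; apply hKspec; rw [gsucc K]; omega
  have ascK1 : cs.length (g K) < cs.length (g K * cs.simple (letter (K-1))) := by
    have hgk : g K = g (K-1) * cs.simple (letter (K-1)) := by
      have : K - 1 + 1 = K := by omega
      rw [← this, gsucc (K-1), this]
    have hcancel : g K * cs.simple (letter (K-1)) = g (K-1) := by
      rw [hgk, mul_assoc, cs.simple_mul_simple_self, mul_one]
    rw [hcancel]
    have h1 := steps (K-1) (by omega)
    have : K - 1 + 1 = K := by omega
    rw [this] at h1
    omega
  -- letters K and K-1 are i and j in some order
  have hletters : (letter K = i ∧ letter (K-1) = j) ∨ (letter K = j ∧ letter (K-1) = i) := by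
    rcases Nat.even_or_odd K with hkeven | hkodd
    · right
      constructor
      · simp [hletter, Nat.even_iff.mp hkeven]
      · have : (K - 1) % 2 = 1 := by
          have := Nat.even_iff.mp hkeven; omega
        simp [hletter, this]
    · left
      constructor
      · simp [hletter, Nat.odd_iff.mp hkodd]
      · have : (K - 1) % 2 = 0 := by
          have := Nat.odd_iff.mp hkodd; omega
        simp [hletter, this]
  have hlenGK : cs.length (g K) < n := by omega
  have posi : ∀ z : ℤ, (z : ZMod e) = i → rho he (g K) z < rho he (g K) (z + 1) := by
    rcases hletters with ⟨h1, h2⟩ | ⟨h1, h2⟩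
    · exact fun z hz => IH _ hlenGK (g K) i rfl (h1 ▸ ascK) z hz
    · exact fun z hz => IH _ hlenGK (g K) i rfl (h2 ▸ ascK1) z hz
  have posj : ∀ z : ℤ, (z : ZMod e) = j → rho he (g K) z < rho he (g K) (z + 1) := by
    rcases hletters with ⟨h1, h2⟩ | ⟨h1, h2⟩
    · exact fun z hz => IH _ hlenGK (g K) j rfl (h2 ▸ ascK1) z hz
    · exact fun z hz => IH _ hlenGK (g K) j rfl (h1 ▸ ascK) z hz
  -- w = g K * (π (myword K))⁻¹ and so ρ w = ρ (g K) ∘ r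
  have hwgk : w = g K * (cs.wordProd (myword K))⁻¹ := by
    rw [hg]
    simp [mul_assoc]
  have rho_w : ∀ x : ℤ, rho he w x
      = rho he (g K) (rho he ((cs.wordProd (myword K))⁻¹) x) := by
    intro x
    rw [hwgk, map_mul]
    rfl
  set r : Equiv.Perm ℤ := rho he ((cs.wordProd (myword K))⁻¹) with hr
  rw [rho_w z, rho_w (z+1)]
  by_cases he2 : e = 2
  · -- infinite dihedral case: ρ (g K) is globally monotone
    subst he2
    have hij2 : j = i + 1 := zmod2_succ i j (Ne.symm hji)
    have hall : ∀ x : ℤ, (x : ZMod 2) = i ∨ (x : ZMod 2) = j := by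
      intro x
      rcases zmod2_all (x : ZMod 2) i with h | h
      · exact Or.inl h
      · exact Or.inr (by rw [h, ← hij2])
    have hmono : ∀ x y : ℤ, x < y →
        rho he (g K) x < rho he (g K) y := by
      apply int_mono_of_steps
      intro x
      rcases hall x with hx | hx
      · exact posi x hx
      · exact posj x hx
    have rvals : ∀ k : ℕ, rho he ((cs.wordProd (myword k))⁻¹) z = z - k ∧
        rho he ((cs.wordProd (myword k))⁻¹) (z + 1) = z + 1 + k := by
      intro k
      induction k with
      | zero =>
          simp [hmyword]
      | succ k ih =>
          have hrev : ((myword (k+1)).reverse) = letter k :: (myword k).reverse := by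
            rw [myword_succ]
            simp
          have hwp : (cs.wordProd (myword (k+1)))⁻¹
              = cs.simple (letter k) * (cs.wordProd (myword k))⁻¹ := by
            rw [← cs.wordProd_reverse, hrev, cs.wordProd_cons, cs.wordProd_reverse]
          obtain ⟨ih1, ih2⟩ := ih
          have happ : ∀ x : ℤ, rho he ((cs.wordProd (myword (k+1)))⁻¹) x
              = sig he (letter k) (rho he ((cs.wordProd (myword k))⁻¹) x) := by
            intro x
            rw [hwp, map_mul, rho_simple]
            rfl
          have hkcast : ((k : ℤ) : ZMod 2) = ((k : ℕ) : ZMod 2) := by push_cast; ring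
          rcases Nat.even_or_odd k with hke | hko
      -- k even : letter k = j = i + 1 ; z - k ≡ i ; z + 1 + k ≡ i + 1
          · have hk0 : ((k : ℕ) : ZMod 2) = 0 := by
              rw [← ZMod.natCast_mod k 2, Nat.even_iff.mp hke]
              rfl
            have hlk : letter k = j := by simp [hletter, Nat.even_iff.mp hke]
            have c1 : ((z - k : ℤ) : ZMod 2) = (i + 1) + 1 := by
              push_cast [hz, hk0]
              rw [show i + 1 + 1 = i + 2 by ring, zmod2_two, add_zero]
              ring
            have c2 : ((z + 1 + k : ℤ) : ZMod 2) = i + 1 := by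
              push_cast [hz, hk0]; ring
            constructor
            · rw [happ, ih1, hlk, hij2, sig_apply_of_eq_add_one he c1]
              push_cast; ring
            · rw [happ, ih2, hlk, hij2, sig_apply_of_eq he c2]
              push_cast; ring
      -- k odd : letter k = i ; z - k ≡ i + 1 ; z + 1 + k ≡ i
          · have hk1 : ((k : ℕ) : ZMod 2) = 1 := by
              rw [← ZMod.natCast_mod k 2, Nat.odd_iff.mp hko]
              rfl
            have hlk : letter k = i := by simp [hletter, Nat.odd_iff.mp hko]
            have c1 : ((z - k : ℤ) : ZMod 2) = i + 1 := by
              push_cast [hz, hk1]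
              rw [sub_eq_add_neg, zmod2_neg_one]
            have c2 : ((z + 1 + k : ℤ) : ZMod 2) = i := by
              push_cast [hz, hk1]
              rw [show i + 1 + 1 = i + 2 by ring, zmod2_two, add_zero]
            constructor
            · rw [happ, ih1, hlk, sig_apply_of_eq_add_one he c1]
              push_cast; ring
            · rw [happ, ih2, hlk, sig_apply_of_eq he c2]
              push_cast; ring
    obtain ⟨rv1, rv2⟩ := rvals K
    rw [hr, rv1, rv2]
    apply hmono
    have : (0 : ℤ) ≤ (K : ℤ) := Int.natCast_nonneg K
    omega
  · -- finite braid cases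
    have hij' : i ≠ j := Ne.symm hji
    have mywordAlt : ∀ k, myword k =
        if Even k then alternatingWord j i k else alternatingWord i j k := by
      intro k
      induction k with
      | zero => simp [hmyword, alternatingWord]
      | succ k ih =>
          rw [myword_succ, ih]
          rcases Nat.even_or_odd k with hke | hko
          · have h1 : ¬ Even (k+1) := by simp [Nat.even_add_one, hke]
            rw [if_pos hke, if_neg h1, alternatingWord_succ i j k]
            have : letter k = j := by simp [hletter, Nat.even_iff.mp hke]
            rw [this, List.concat_eq_append]
          · have h1 : Even (k+1) := by simp [Nat.even_add_one, Nat.not_even_iff_odd.mpr hko]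
            rw [if_neg (Nat.not_even_iff_odd.mpr hko), if_pos h1, alternatingWord_succ j i k]
            have : letter k = i := by simp [hletter, Nat.odd_iff.mp hko]
            rw [this, List.concat_eq_append]
    have hcons : (i :: myword K) = if Even K then alternatingWord j i (K+1)
        else alternatingWord i j (K+1) := by
      rcases Nat.even_or_odd K with hke | hko
      · rw [if_pos hke, alternatingWord_succ' j i K, if_pos hke, mywordAlt K, if_pos hke]
      · rw [if_neg (Nat.not_even_iff_odd.mpr hko), alternatingWord_succ' i j K,
          if_neg (Nat.not_even_iff_odd.mpr hko), mywordAlt K,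
          if_neg (Nat.not_even_iff_odd.mpr hko)]
    have Kbound : K < (affineA e) i j := by
      by_contra hKb
      push_neg at hKb
      have hMne0 : (affineA e) i j ≠ 0 := by
        rw [affineA_apply, if_neg hij']
        split_ifs <;> omega
      have hnr : ¬ cs.IsReduced (i :: myword K) := by
        rcases Nat.even_or_odd K with hke | hko
        · rw [hcons, if_pos hke]
          apply cs.not_isReduced_alternatingWord j i
          · rw [(affineA e).symmetric j i]; exact hMne0
          · rw [(affineA e).symmetric j i]; omega
        · rw [hcons, if_neg (Nat.not_even_iff_odd.mpr hko)]
          apply cs.not_isReduced_alternatingWord i j hMne0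
          omega
      have hle : cs.length (cs.wordProd (i :: myword K)) ≤ K := by
        have h1 := cs.length_wordProd_le (i :: myword K)
        have h2 : (i :: myword K).length = K + 1 := by simp [hmyword]
        have h3 : cs.length (cs.wordProd (i :: myword K)) ≠ K + 1 := by
          intro hcontra
          apply hnr
          rw [CoxeterSystem.IsReduced, hcontra, h2]
        omega
      have hws : w * cs.simple i = g K * (cs.wordProd (i :: myword K))⁻¹ := by
        rw [cs.wordProd_cons, mul_inv_rev, cs.inv_simple, hg]
        simp [mul_assoc]
      have hfin : cs.length (w * cs.simple i) ≤ cs.length (g K) + K := by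
        rw [hws]
        calc cs.length (g K * (cs.wordProd (i :: myword K))⁻¹)
            ≤ cs.length (g K) + cs.length ((cs.wordProd (i :: myword K))⁻¹) :=
              cs.length_mul_le _ _
          _ = cs.length (g K) + cs.length (cs.wordProd (i :: myword K)) := by
              rw [cs.length_inv]
          _ ≤ cs.length (g K) + K := by omega
      omega
    -- helper disequalities
    have n1 : ∀ a : ZMod e, a + 1 ≠ a := add_one_ne he
    have n2 : ∀ a : ZMod e, a + 2 ≠ a := add_two_ne he he2
    have n21 : ∀ a : ZMod e, a + 2 ≠ a + 1 := add_two_ne_add_one he he2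
    have hm1 : myword 1 = [j] := by
      simp [hmyword, hletter, List.range_succ]
    have hm2 : myword 2 = [j, i] := by
      have : List.range 2 = [0, 1] := by decide
      simp [hmyword, hletter, this]
    by_cases hadj : j = i + 1 ∨ i = j + 1
    · -- M = 3 : K = 1 or 2
      have hM3 : (affineA e) i j = 3 := by
        rw [affineA_apply, if_neg hij', if_pos hadj, if_neg he2]
      have hK12 : K = 1 ∨ K = 2 := by omega
      rcases hadj with hA | hB
      · -- j = i + 1
        have cz1 : ((z + 1 : ℤ) : ZMod e) = j := by push_cast [hz, hA]; ring
        rcases hK12 with hKe | hKe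
        · have hrr : ∀ x : ℤ, r x = sig he j x := by
            intro x
            rw [hr, hKe, hm1, cs.wordProd_singleton, cs.inv_simple, rho_simple]
          have rz : r z = z := by
            rw [hrr]
            apply sig_apply_of_ne he
            · rw [hz, hA]; exact Ne.symm (n1 i)
            · rw [hz, hA, show i + 1 + 1 = i + 2 by ring]; exact Ne.symm (n2 i)
          have rz1 : r (z + 1) = z + 1 + 1 := by
            rw [hrr]
            exact sig_apply_of_eq he cz1
          rw [rz, rz1]
          exact lt_trans (posi z hz) (posj (z+1) cz1)
        · have hrr : ∀ x : ℤ, r x = sig he i (sig he j x) := by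
            intro x
            rw [hr, hKe, hm2]
            have : cs.wordProd [j, i] = cs.simple j * cs.simple i := by
              rw [show [j, i] = [j] ++ [i] from rfl, cs.wordProd_append,
                cs.wordProd_singleton, cs.wordProd_singleton]
            rw [this, mul_inv_rev, cs.inv_simple, cs.inv_simple, map_mul, rho_simple, rho_simple]
            rfl
          have rz : r z = z + 1 := by
            rw [hrr]
            have h1 : sig he j z = z := by
              apply sig_apply_of_ne he
              · rw [hz, hA]; exact Ne.symm (n1 i)
              · rw [hz, hA, show i + 1 + 1 = i + 2 by ring]; exact Ne.symm (n2 i)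
            rw [h1, sig_apply_of_eq he hz]
          have rz1 : r (z + 1) = z + 1 + 1 := by
            rw [hrr]
            have h1 : sig he j (z + 1) = z + 1 + 1 := sig_apply_of_eq he cz1
            rw [h1]
            apply sig_apply_of_ne he
            · have : ((z + 1 + 1 : ℤ) : ZMod e) = i + 2 := by push_cast [hz]; ring
              rw [this]; exact n2 i
            · have : ((z + 1 + 1 : ℤ) : ZMod e) = i + 2 := by push_cast [hz]; ring
              rw [this]; exact n21 i
          rw [rz, rz1]
          exact posj (z+1) cz1
      · -- i = j + 1
        have czm : ((z - 1 : ℤ) : ZMod e) = j := by push_cast [hz, hB]; ring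
        have cz1 : ((z + 1 : ℤ) : ZMod e) = j + 2 := by push_cast [hz, hB]; ring
        have chain : rho he (g K) (z - 1) < rho he (g K) z := by
          have h := posj (z - 1) czm
          rw [show z - 1 + 1 = z by ring] at h
          exact h
        rcases hK12 with hKe | hKe
        · have hrr : ∀ x : ℤ, r x = sig he j x := by
            intro x
            rw [hr, hKe, hm1, cs.wordProd_singleton, cs.inv_simple, rho_simple]
          have rz : r z = z - 1 := by
            rw [hrr]
            apply sig_apply_of_eq_add_one he
            rw [hz, hB]
          have rz1 : r (z + 1) = z + 1 := by
            rw [hrr]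
            apply sig_apply_of_ne he
            · rw [cz1]; exact n2 j
            · rw [cz1]; exact n21 j
          rw [rz, rz1]
          exact lt_trans chain (posi z hz)
        · have hrr : ∀ x : ℤ, r x = sig he i (sig he j x) := by
            intro x
            rw [hr, hKe, hm2]
            have : cs.wordProd [j, i] = cs.simple j * cs.simple i := by
              rw [show [j, i] = [j] ++ [i] from rfl, cs.wordProd_append,
                cs.wordProd_singleton, cs.wordProd_singleton]
            rw [this, mul_inv_rev, cs.inv_simple, cs.inv_simple, map_mul, rho_simple, rho_simple]
            rfl
          have rz : r z = z - 1 := by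
            rw [hrr]
            have h1 : sig he j z = z - 1 := by
              apply sig_apply_of_eq_add_one he
              rw [hz, hB]
            rw [h1]
            apply sig_apply_of_ne he
            · rw [czm, hB]
              intro h
              exact n1 j (by rw [← h])
            · rw [czm, hB, show j + 1 + 1 = j + 2 by ring]
              intro h
              exact n2 j (by rw [← h])
          have rz1 : r (z + 1) = z := by
            rw [hrr]
            have h1 : sig he j (z + 1) = z + 1 := by
              apply sig_apply_of_ne he
              · rw [cz1]; exact n2 j
              · rw [cz1]; exact n21 j
            rw [h1]
            have : ((z + 1 : ℤ) : ZMod e) = i + 1 := by push_cast [hz]; ring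
            rw [sig_apply_of_eq_add_one he this]
            ring
          rw [rz, rz1]
          exact chain
    · -- M = 2 : K = 1, commuting case
      have hM2 : (affineA e) i j = 2 := by
        rw [affineA_apply, if_neg hij', if_neg hadj]
      push_neg at hadj
      obtain ⟨hna1, hna2⟩ := hadj
      have hKe : K = 1 := by omega
      have hrr : ∀ x : ℤ, r x = sig he j x := by
        intro x
        rw [hr, hKe, hm1, cs.wordProd_singleton, cs.inv_simple, rho_simple]
      have rz : r z = z := by
        rw [hrr]
        apply sig_apply_of_ne he
        · rw [hz]; exact fun h => hji h.symm
        · rw [hz]; exact hna2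
      have rz1 : r (z + 1) = z + 1 := by
        rw [hrr]
        have c1 : ((z + 1 : ℤ) : ZMod e) = i + 1 := by push_cast [hz]; ring
        apply sig_apply_of_ne he
        · rw [c1]; exact fun h => hna1 h.symm
        · rw [c1]; intro h; exact hij' (add_right_cancel h)
      rw [rz, rz1]
      exact posi z hz

end Pos

end Prop44
namespace Prop44

open CoxeterSystem List

variable {e : ℕ}

/-- The beta-set of the empty partition with charge `m`. -/
def BmSet (m : ℤ) : Set ℤ := {x | x ≤ m}

/-- The beta-set attached to a group element. -/
def BSet (he : 2 ≤ e) (m : ℤ) (g : (affineA e).Group) : Set ℤ := rho he g '' BmSet m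

lemma mem_BSet_iff (he : 2 ≤ e) (m : ℤ) (g : (affineA e).Group) (x : ℤ) :
    x ∈ BSet he m g ↔ rho he g⁻¹ x ≤ m := by
  constructor
  · rintro ⟨y, hy, rfl⟩
    rw [map_inv]
    simpa [BmSet] using hy
  · intro h
    refine ⟨rho he g⁻¹ x, h, ?_⟩
    rw [map_inv]
    exact Equiv.apply_symm_apply _ _

lemma BSet_one (he : 2 ≤ e) (m : ℤ) : BSet he m 1 = BmSet m := by
  unfold BSet
  rw [map_one]
  simp

lemma BSet_simple_mul (he : 2 ≤ e) (m : ℤ) (i : ZMod e) (g : (affineA e).Group) :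
    BSet he m ((affineACS e).simple i * g) = sig he i '' BSet he m g := by
  unfold BSet
  rw [map_mul, rho_simple, Equiv.Perm.coe_mul, Set.image_comp]

lemma cast_sub_mul_e (x k : ℤ) : ((x - k * e : ℤ) : ZMod e) = (x : ZMod e) := by
  push_cast [ZMod.natCast_self]
  ring

lemma cast_add_e (x : ℤ) : ((x + e : ℤ) : ZMod e) = (x : ZMod e) := by
  push_cast [ZMod.natCast_self]
  ring

lemma exists_shift (he : 2 ≤ e) (m c : ℤ) : ∃ k : ℤ, m - e < c - k * e ∧ c - k * e ≤ m := by
  have he0 : (0 : ℤ) < e := by exact_mod_cast (by omega : 0 < e)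
  obtain ⟨q, r, hqr, hr0, hrlt⟩ : ∃ q r : ℤ, c - (m - e + 1) = e * q + r ∧ 0 ≤ r ∧ r < e :=
    ⟨(c - (m - e + 1)) / e, (c - (m - e + 1)) % e, (Int.mul_ediv_add_emod _ _).symm,
      Int.emod_nonneg _ (ne_of_gt he0), Int.emod_lt_of_pos _ he0⟩
  refine ⟨q, ?_, ?_⟩
  · have h1 : c - q * e = m - e + 1 + r := by rw [mul_comm]; linarith
    linarith
  · have h1 : c - q * e = m - e + 1 + r := by rw [mul_comm]; linarith
    linarith

lemma length_inv_simple_mul (he : 2 ≤ e) (g : (affineA e).Group) (i : ZMod e) :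
    (affineACS e).length (g⁻¹ * (affineACS e).simple i)
      = (affineACS e).length ((affineACS e).simple i * g) := by
  rw [← (affineACS e).length_inv (g⁻¹ * (affineACS e).simple i), mul_inv_rev,
    (affineACS e).inv_simple, inv_inv]

/-- ascent on the left at `i` means `g⁻¹` preserves the order of `(z, z+1)` for `z ≡ i`. -/
lemma inv_pair_of_ascentL (he : 2 ≤ e) {g : (affineA e).Group} {i : ZMod e}
    (h : (affineACS e).length g < (affineACS e).length ((affineACS e).simple i * g))
    {z : ℤ} (hz : (z : ZMod e) = i) : rho he g⁻¹ z < rho he g⁻¹ (z + 1) := by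
  have h' : (affineACS e).length g⁻¹
      < (affineACS e).length (g⁻¹ * (affineACS e).simple i) := by
    rw [length_inv_simple_mul he, (affineACS e).length_inv]
    exact h
  exact pos_of_ascent he g⁻¹ i h' z hz

/-- descent on the left at `i` means `g⁻¹` inverts the pair `(z, z+1)` for `z ≡ i`. -/
lemma inv_pair_of_descentL (he : 2 ≤ e) {g : (affineA e).Group} {i : ZMod e}
    (h : (affineACS e).length ((affineACS e).simple i * g) < (affineACS e).length g)
    {z : ℤ} (hz : (z : ZMod e) = i) : rho he g⁻¹ (z + 1) < rho he g⁻¹ z := by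
  set cs := affineACS e with hcs
  set w' := g⁻¹ * cs.simple i with hw'
  have h1 : cs.length w' < cs.length (w' * cs.simple i) := by
    have h2 : w' * cs.simple i = g⁻¹ := by
      rw [hw', mul_assoc, cs.simple_mul_simple_self, mul_one]
    rw [h2, cs.length_inv, hw', length_inv_simple_mul he]
    exact h
  have h2 := pos_of_ascent he w' i h1 z hz
  have hz1 : ((z + 1 : ℤ) : ZMod e) = i + 1 := by push_cast [hz]; ring
  have e1 : ∀ x : ℤ, rho he w' x = rho he g⁻¹ (sig he i x) := by
    intro x
    rw [hw', map_mul, rho_simple]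
    rfl
  rw [e1 z, e1 (z+1), sig_apply_of_eq he hz, sig_apply_of_eq_add_one he hz1] at h2
  simpa using h2

/-- L1a : a removable `i`-position in the beta-set forces a left descent at `i` (any `g`). -/
lemma descentL_of_rem (he : 2 ≤ e) (m : ℤ) {g : (affineA e).Group} {i : ZMod e} {x₀ : ℤ}
    (hx0 : (x₀ : ZMod e) = i) (h1 : x₀ ∉ BSet he m g) (h2 : x₀ + 1 ∈ BSet he m g) :
    (affineACS e).length ((affineACS e).simple i * g) < (affineACS e).length g := by
  set cs := affineACS e with hcs
  have paff : IsAff e (rho he g⁻¹) := isAff_rho he g⁻¹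
  set p : ℤ → ℤ := fun x => rho he g⁻¹ x with hp
  have pshift : ∀ (x k : ℤ), p (x - k * e) = p x - k * e := by
    intro x k
    have := isAff_zsmul paff (-k) x
    have hx : x + (-k) * e = x - k * e := by ring
    rw [hx] at this
    rw [hp]
    simp only at this ⊢
    omega
  have hpx0 : m < p x₀ := by
    by_contra hc
    push_neg at hc
    exact h1 ((mem_BSet_iff he m g x₀).mpr hc)
  have hpx1 : p (x₀ + 1) ≤ m := (mem_BSet_iff he m g (x₀ + 1)).mp h2
  obtain ⟨k, hk1, hk2⟩ := exists_shift he m (p x₀)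
  obtain ⟨k', hk1', hk2'⟩ := exists_shift he m (p (x₀ + 1))
  set z₀ := x₀ - k * e with hz₀
  have hpz₀ : p z₀ = p x₀ - k * e := pshift x₀ k
  have hz₀c : (z₀ : ZMod e) = i := by rw [hz₀, cast_sub_mul_e, hx0]
  have he0 : (0 : ℤ) < e := by exact_mod_cast (by omega : 0 < e)
  have hkpos : 1 ≤ k := by
    by_contra hc
    push_neg at hc
    have : k * e ≤ 0 := mul_nonpos_of_nonpos_of_nonneg (by omega) (le_of_lt he0)
    omega
  have hk'neg : k' ≤ 0 := by
    by_contra hc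
    push_neg at hc
    have : e ≤ k' * e := le_mul_of_one_le_left (le_of_lt he0) (by omega)
    omega
  -- p (z₀ + 1) lands at least e below the window
  have hz01 : z₀ + 1 = (x₀ + 1) - (k' * e) + ((k' - k) * e) := by ring
  have hpz₀1 : p (z₀ + 1) = p (x₀ + 1) - k * e := by
    have := pshift (x₀ + 1) k
    have hx : (x₀ + 1) - k * e = z₀ + 1 := by rw [hz₀]; ring
    rw [hx] at this
    exact this
  have hlow : p (z₀ + 1) ≤ m - e := by
    have h3 : (k - k') * e ≥ e := le_mul_of_one_le_left (le_of_lt he0) (by omega)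
    have h4 : p (x₀ + 1) - k * e = (p (x₀ + 1) - k' * e) - (k - k') * e := by ring
    omega
  -- conclude: the pair (z₀, z₀+1) is inverted by p, so i is not a left ascent
  rcases cs.length_simple_mul g i with hcase | hcase
  · exfalso
    have hasc : cs.length g < cs.length (cs.simple i * g) := by omega
    have hthis : p z₀ < p (z₀ + 1) := inv_pair_of_ascentL he hasc hz₀c
    omega
  · omega

end Prop44
namespace Prop44

open CoxeterSystem List

variable {e : ℕ}

lemma dist_ascent (he : 2 ≤ e) (m : ℤ) {g : (affineA e).Group}
    (hdist : IsDistinguished e m g) {j : ZMod e} (hj : j ≠ (m : ZMod e)) :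
    (affineACS e).length g < (affineACS e).length (g * (affineACS e).simple j) := by
  have hsimp : (affineACS e).simple j = (affineA e).simple j := by
    rw [affineACS]
    exact congrFun (CoxeterMatrix.toCoxeterSystem_simple (affineA e)) j
  have hmem : (affineA e).simple j ∈ Subgroup.closure {g : (affineA e).Group |
      ∃ j : ZMod e, j ≠ (m : ZMod e) ∧ g = (affineA e).simple j} :=
    Subgroup.subset_closure ⟨j, hj, rfl⟩
  have h1 := hdist _ hmem
  rw [← hsimp] at h1
  have h2 := (affineACS e).length_mul_simple_ne g j
  omega

lemma dist_pos_step (he : 2 ≤ e) (m : ℤ) {g : (affineA e).Group}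
    (hdist : IsDistinguished e m g) (x : ℤ) (hx : (x : ZMod e) ≠ (m : ZMod e)) :
    rho he g x < rho he g (x + 1) :=
  pos_of_ascent he g ((x : ZMod e)) (dist_ascent he m hdist hx) x rfl

lemma class_ne_of_window (he : 2 ≤ e) (m : ℤ) {x : ℤ} (h1 : m - e < x) (h2 : x < m) :
    (x : ZMod e) ≠ (m : ZMod e) := by
  intro h
  have hmod : x ≡ m [ZMOD (e : ℕ)] := (ZMod.intCast_eq_intCast_iff x m e).mp h
  have hdvd : (e : ℤ) ∣ m - x := Int.ModEq.dvd hmod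
  have := Int.le_of_dvd (by omega) hdvd
  omega

lemma window_mono (he : 2 ≤ e) (m : ℤ) {g : (affineA e).Group}
    (hdist : IsDistinguished e m g) {a b : ℤ} (ha : m - e < a) (hab : a < b) (hb : b ≤ m) :
    rho he g a < rho he g b := by
  have key : ∀ n : ℕ, ∀ x : ℤ, m - e < x → x + (n + 1) ≤ m → rho he g x < rho he g (x + (n + 1)) := by
    intro n
    induction n with
    | zero =>
        intro x h1 h2
        have := dist_pos_step he m hdist x (class_ne_of_window he m h1 (by omega))
        simpa using this
    | succ n ih =>
        intro x h1 h2
        have ih1 := ih x h1 (by push_cast at h2 ⊢; omega)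
        have hstep := dist_pos_step he m hdist (x + (n+1))
          (class_ne_of_window he m (by push_cast; omega) (by push_cast at h2; omega))
        have heq : x + ((n : ℤ) + 1) + 1 = x + ((n + 1 : ℕ) + 1) := by push_cast; ring
        rw [heq] at hstep
        exact lt_trans ih1 hstep
  obtain ⟨n, hn⟩ : ∃ n : ℕ, b = a + (n + 1) := by
    refine ⟨(b - a - 1).toNat, ?_⟩
    have : ((b - a - 1).toNat : ℤ) = b - a - 1 := Int.toNat_of_nonneg (by omega)
    omega
  rw [hn]
  exact key _ a ha (by omega)

/-- L1b : for a distinguished element, a left descent at `i` yields a removable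
`i`-position in the beta-set. -/
lemma rem_of_descentL (he : 2 ≤ e) (m : ℤ) {g : (affineA e).Group} {i : ZMod e}
    (hdist : IsDistinguished e m g)
    (h : (affineACS e).length ((affineACS e).simple i * g) < (affineACS e).length g) :
    ∃ x₀ : ℤ, (x₀ : ZMod e) = i ∧ x₀ ∉ BSet he m g ∧ x₀ + 1 ∈ BSet he m g := by
  haveI : NeZero e := ⟨by omega⟩
  have paff : IsAff e (rho he g⁻¹) := isAff_rho he g⁻¹
  set p : ℤ → ℤ := fun x => rho he g⁻¹ x with hp
  have pshift : ∀ (x k : ℤ), p (x - k * e) = p x - k * e := by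
    intro x k
    have h0 := isAff_zsmul paff (-k) x
    have hx : x + (-k) * e = x - k * e := by ring
    rw [hx] at h0
    simp only [hp] at h0 ⊢
    omega
  have he0 : (0 : ℤ) < e := by exact_mod_cast (by omega : 0 < e)
  set z : ℤ := (i.val : ℤ) with hzdef
  have hzc : (z : ZMod e) = i := by
    rw [hzdef]
    push_cast
    exact ZMod.natCast_rightInverse i
  obtain ⟨k, hk1, hk2⟩ := exists_shift he m (p z)
  set z₀ := z - k * e with hz₀
  have hpz₀ : p z₀ = p z - k * e := pshift z k
  have hz₀c : (z₀ : ZMod e) = i := by rw [hz₀, cast_sub_mul_e, hzc]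
  obtain ⟨k', hk1', hk2'⟩ := exists_shift he m (p (z₀ + 1))
  have hinv : p (z₀ + 1) < p z₀ := inv_pair_of_descentL he h hz₀c
  have hk'neg : k' ≤ -1 := by
    rcases lt_or_ge k' 0 with hlt | hge
    · -- k' < 0, need ≤ -1
      omega
    · rcases Nat.eq_zero_or_pos k'.toNat with h0 | hpos
      · -- k' = 0 : contradiction via window monotonicity
        exfalso
        have hk'0 : k' = 0 := by omega
        rw [hk'0] at hk1' hk2'
        simp only [zero_mul, sub_zero] at hk1' hk2'
        -- p (z₀ + 1) < p z₀, both in window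
        have happ : ∀ x : ℤ, rho he g (p x) = x := by
          intro x
          simp only [hp]
          rw [map_inv]
          exact Equiv.apply_symm_apply _ _
        have := window_mono he m hdist hk1' hinv (by omega)
        rw [happ, happ] at this
        omega
      · -- k' ≥ 1 : p (z₀+1) would be above the window
        exfalso
        have hk'1 : 1 ≤ k' := by omega
        have : e ≤ k' * e := le_mul_of_one_le_left (le_of_lt he0) hk'1
        omega
  refine ⟨z₀ + e, ?_, ?_, ?_⟩
  · rw [cast_add_e, hz₀c]
  · rw [mem_BSet_iff]
    push_neg
    have h0 := isAff_zsmul paff 1 z₀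
    rw [show z₀ + 1 * (e : ℤ) = z₀ + e by ring, one_mul] at h0
    have h0' : p (z₀ + e) = p z₀ + e := h0
    change m < p (z₀ + e)
    omega
  · rw [mem_BSet_iff]
    have h0 := isAff_zsmul paff 1 (z₀ + 1)
    rw [show z₀ + 1 + 1 * (e : ℤ) = z₀ + e + 1 by ring, one_mul] at h0
    have h1 : p (z₀ + e + 1) = p (z₀ + 1) + e := h0
    have h2 : k' * e ≤ (-1) * e := mul_le_mul_of_nonneg_right hk'neg (le_of_lt he0)
    change p (z₀ + e + 1) ≤ m
    omega

lemma dist_simple_mul (he : 2 ≤ e) (m : ℤ) {g : (affineA e).Group} {i : ZMod e}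
    (hdist : IsDistinguished e m g)
    (hdesc : (affineACS e).length ((affineACS e).simple i * g) < (affineACS e).length g) :
    IsDistinguished e m ((affineACS e).simple i * g) := by
  intro x hx
  have h1 := hdist x hx
  have h2 : (affineACS e).length (g * x)
      ≤ (affineACS e).length ((affineACS e).simple i * (g * x)) + 1 := by
    rcases (affineACS e).length_simple_mul (g * x) i with h | h <;> omega
  have h3 : (affineACS e).length ((affineACS e).simple i * g) + 1
      = (affineACS e).length g := by
    rcases (affineACS e).length_simple_mul g i with h | h <;> omega
  rw [mul_assoc]
  omega

end Prop44
namespace Prop44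

open CoxeterSystem List

variable {e : ℕ}

/-- The `k`-th beta number. -/
def bet (l : CorePartition) (m : ℤ) (k : ℕ) : ℤ := (l.parts k : ℤ) + m - k

lemma mem_betaSet_iff {l : CorePartition} {m : ℤ} {x : ℤ} :
    x ∈ betaSet l m ↔ ∃ k : ℕ, x = bet l m k := Iff.rfl

lemma parts_anti (l : CorePartition) : Antitone l.parts :=
  antitone_nat_of_succ_le l.antitone

lemma bet_lt {l : CorePartition} {m : ℤ} {a b : ℕ} (h : a < b) : bet l m b < bet l m a := by
  have h1 : l.parts b ≤ l.parts a := parts_anti l (le_of_lt h)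
  unfold bet
  omega

lemma bet_inj {l : CorePartition} {m : ℤ} {a b : ℕ} (h : bet l m a = bet l m b) : a = b := by
  rcases lt_trichotomy a b with hlt | heq | hgt
  · have := bet_lt (l := l) (m := m) hlt; omega
  · exact heq
  · have := bet_lt (l := l) (m := m) hgt; omega

lemma succ_row {l : CorePartition} {m : ℤ} {a b : ℕ} (h : bet l m b = bet l m a + 1) :
    a = b + 1 := by
  have hba : b < a := by
    rcases lt_trichotomy a b with hlt | heq | hgt
    · have := bet_lt (l := l) (m := m) hlt; omega
    · subst heq; omega
    · exact hgt
  by_contra hne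
  have hb1a : b + 1 < a := by omega
  have h1 := bet_lt (l := l) (m := m) hb1a
  have h2 := bet_lt (l := l) (m := m) (by omega : b < b + 1)
  omega

lemma pred_row {l : CorePartition} {m : ℤ} {a b : ℕ} (h : bet l m b = bet l m a - 1) :
    b = a + 1 := by
  have hba : a < b := by
    rcases lt_trichotomy a b with hlt | heq | hgt
    · exact hlt
    · subst heq; omega
    · have := bet_lt (l := l) (m := m) hgt; omega
  by_contra hne
  have hb1a : a + 1 < b := by omega
  have h1 := bet_lt (l := l) (m := m) hb1a
  have h2 := bet_lt (l := l) (m := m) (by omega : a < a + 1)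
  omega

lemma removable_iff {l : CorePartition} (m : ℤ) {a : ℕ} :
    removableRow l a ↔ bet l m a - 1 ∉ betaSet l m := by
  constructor
  · intro hrem ⟨b, hb⟩
    have hb' : bet l m b = bet l m a - 1 := hb.symm
    have hba := pred_row hb'
    subst hba
    unfold bet at hb'
    unfold removableRow at hrem
    omega
  · intro hmem
    unfold removableRow
    by_contra hc
    push_neg at hc
    have h1 : l.parts (a+1) = l.parts a := le_antisymm (l.antitone a) hc
    apply hmem
    refine ⟨a + 1, ?_⟩
    unfold bet
    omega

lemma addable_iff {l : CorePartition} (m : ℤ) {a : ℕ} :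
    addableRow l a ↔ bet l m a + 1 ∉ betaSet l m := by
  constructor
  · intro hadd ⟨b, hb⟩
    have hb' : bet l m b = bet l m a + 1 := hb.symm
    have hba := succ_row hb'
    unfold addableRow at hadd
    rcases hadd with h0 | hlt
    · omega
    · subst hba
      unfold bet at hb'
      simp only [Nat.add_sub_cancel] at hlt
      omega
  · intro hmem
    unfold addableRow
    by_contra hc
    push_neg at hc
    obtain ⟨h0, hge⟩ := hc
    have h1 : l.parts (a - 1) = l.parts a :=
      le_antisymm hge (parts_anti l (by omega))
    apply hmem
    refine ⟨a - 1, ?_⟩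
    unfold bet
    have : ((a - 1 : ℕ) : ℤ) = (a : ℤ) - 1 := by omega
    omega

lemma mem_remRows_iff {m : ℤ} {i : ZMod e} {l : CorePartition} {a : ℕ} :
    a ∈ RemRows e m i l ↔ removableRow l a ∧ ((bet l m a - 1 : ℤ) : ZMod e) = i := by
  have hh : (m + (l.parts a : ℤ) - 1 - a) = bet l m a - 1 := by unfold bet; ring
  unfold RemRows
  rw [Set.mem_setOf_eq, hh]

lemma mem_addRows_iff {m : ℤ} {i : ZMod e} {l : CorePartition} {a : ℕ} :
    a ∈ AddRows e m i l ↔ addableRow l a ∧ ((bet l m a : ℤ) : ZMod e) = i := by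
  have hh : (m + (l.parts a : ℤ) - a) = bet l m a := by unfold bet; ring
  unfold AddRows
  rw [Set.mem_setOf_eq, hh]

lemma remRows_nonempty_iff {m : ℤ} {i : ZMod e} {l : CorePartition} :
    (∃ a, a ∈ RemRows e m i l) ↔
      ∃ x : ℤ, (x : ZMod e) = i ∧ x ∉ betaSet l m ∧ x + 1 ∈ betaSet l m := by
  constructor
  · rintro ⟨a, ha⟩
    rw [mem_remRows_iff] at ha
    obtain ⟨hrem, hres⟩ := ha
    refine ⟨bet l m a - 1, hres, (removable_iff m).mp hrem, ⟨a, by unfold bet; ring⟩⟩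
  · rintro ⟨x, hx, hnx, b, hb⟩
    have hb' : x + 1 = bet l m b := hb
    refine ⟨b, ?_⟩
    rw [mem_remRows_iff]
    have hxb : x = bet l m b - 1 := by omega
    constructor
    · rw [removable_iff m, ← hxb]
      exact hnx
    · rw [← hxb]
      exact hx

lemma mem_sub_iter {B : Set ℤ} (hc : ∀ x ∈ B, x - (e : ℤ) ∈ B) :
    ∀ (k : ℕ) {x : ℤ}, x ∈ B → x - k * e ∈ B := by
  intro k
  induction k with
  | zero => intro x hx; simpa using hx
  | succ k ih =>
      intro x hx
      have h1 := hc _ (ih hx)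
      have : x - k * e - e = x - (k + 1 : ℕ) * e := by push_cast; ring
      rwa [this] at h1

lemma no_coexist (he : 2 ≤ e) {B : Set ℤ} (hc : ∀ x ∈ B, x - (e : ℤ) ∈ B)
    {x y : ℤ} (hxy : (x : ZMod e) = (y : ZMod e))
    (hx : x ∈ B) (hx1 : x + 1 ∉ B) (hy : y ∉ B) (hy1 : y + 1 ∈ B) : False := by
  have hmod : x ≡ y [ZMOD (e : ℕ)] := (ZMod.intCast_eq_intCast_iff x y e).mp hxy
  obtain ⟨t, ht⟩ : (e : ℤ) ∣ y - x := Int.ModEq.dvd hmod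
  rw [mul_comm] at ht
  have he0 : (0 : ℤ) < e := by exact_mod_cast (by omega : 0 < e)
  rcases le_or_gt t 0 with hle | hgt
  · -- y = x - (-t) * e ∈ B
    apply hy
    have h1 := mem_sub_iter hc (-t).toNat hx
    have hcast : ((-t).toNat : ℤ) = -t := Int.toNat_of_nonneg (by omega)
    have : x - ((-t).toNat : ℤ) * e = y := by rw [hcast, neg_mul]; omega
    rwa [this] at h1
  · -- x + 1 = (y+1) - t * e ∈ B
    apply hx1
    have h1 := mem_sub_iter hc t.toNat hy1
    have hcast : (t.toNat : ℤ) = t := Int.toNat_of_nonneg (by omega)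
    have : y + 1 - (t.toNat : ℤ) * e = x + 1 := by rw [hcast]; omega
    rwa [this] at h1

end Prop44
namespace Prop44

open CoxeterSystem List

variable {e : ℕ}

lemma sub_one_ne (he : 2 ≤ e) (a : ZMod e) : a - 1 ≠ a := by
  intro h
  apply add_one_ne he a
  have h2 : (a - 1) + 1 = a + 1 := by rw [h]
  rw [sub_add_cancel] at h2
  exact h2.symm

lemma cast_bet_sub_one {x : ℤ} {c : ZMod e} (h : ((x - 1 : ℤ) : ZMod e) = c) :
    (x : ZMod e) = c + 1 := by
  push_cast at h
  rw [← h]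
  ring

lemma cast_bet_sub_one' {x : ℤ} {c : ZMod e} (h : (x : ZMod e) = c + 1) :
    ((x - 1 : ℤ) : ZMod e) = c := by
  push_cast [h]
  ring

/-- The key dictionary: `siAct` realises the permutation `σ_i` on beta-sets of cores. -/
lemma siAct_betaSet (he : 2 ≤ e) {m : ℤ} {i : ZMod e} {l l' : CorePartition}
    (hcore : ∀ x ∈ betaSet l m, x - (e : ℤ) ∈ betaSet l m)
    (hact : siAct e m i l l') :
    betaSet l' m = sig he i '' betaSet l m := by
  have n10 : (1 : ZMod e) ≠ 0 := zmod_one_ne_zero he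
  by_cases hRem : RemRows e m i l = ∅
  · -- addition case
    have hf := hact.1 hRem
    have hnorem : ∀ x : ℤ, (x : ZMod e) = i → x ∉ betaSet l m → x + 1 ∉ betaSet l m := by
      intro x hx hxB hx1B
      obtain ⟨a, ha⟩ := remRows_nonempty_iff.mpr ⟨x, hx, hxB, hx1B⟩
      rw [Set.eq_empty_iff_forall_notMem] at hRem
      exact hRem a ha
    have hbet_mem : ∀ a, a ∈ AddRows e m i l → bet l' m a = bet l m a + 1 := by
      intro a ha
      unfold bet
      rw [(hf a).1 ha]
      push_cast
      ring
    have hbet_not : ∀ a, a ∉ AddRows e m i l → bet l' m a = bet l m a := by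
      intro a ha
      unfold bet
      rw [(hf a).2 ha]
    ext u
    constructor
    · rintro ⟨a, hua⟩
      have hua' : u = bet l' m a := hua
      by_cases hA : a ∈ AddRows e m i l
      · have hcl : ((bet l m a : ℤ) : ZMod e) = i := (mem_addRows_iff.mp hA).2
        refine ⟨bet l m a, ⟨a, rfl⟩, ?_⟩
        rw [sig_apply_of_eq he hcl, ← hbet_mem a hA, ← hua']
      · have hub : u = bet l m a := by rw [hua', hbet_not a hA]
        by_cases hc1 : ((bet l m a : ℤ) : ZMod e) = i
        · have hnadd : ¬ addableRow l a := fun h => hA (mem_addRows_iff.mpr ⟨h, hc1⟩)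
          have hmem1 : bet l m a + 1 ∈ betaSet l m := by
            by_contra hc
            exact hnadd ((addable_iff m).mpr hc)
          obtain ⟨b, hb⟩ := hmem1
          have hb' : bet l m b = bet l m a + 1 := hb.symm
          have hclb : ((bet l m b : ℤ) : ZMod e) = i + 1 := by
            rw [hb']
            push_cast [hc1]
            ring
          refine ⟨bet l m b, ⟨b, rfl⟩, ?_⟩
          rw [sig_apply_of_eq_add_one he hclb, hb', hub]
          ring
        · by_cases hc2 : ((bet l m a : ℤ) : ZMod e) = i + 1
          · have hxcl : ((bet l m a - 1 : ℤ) : ZMod e) = i := cast_bet_sub_one' hc2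
            have hmem1 : bet l m a - 1 ∈ betaSet l m := by
              by_contra hc
              apply hnorem (bet l m a - 1) hxcl hc
              rw [show bet l m a - 1 + 1 = bet l m a by ring]
              exact ⟨a, rfl⟩
            obtain ⟨b, hb⟩ := hmem1
            have hb' : bet l m b = bet l m a - 1 := hb.symm
            have hclb : ((bet l m b : ℤ) : ZMod e) = i := by rw [hb']; exact hxcl
            refine ⟨bet l m b, ⟨b, rfl⟩, ?_⟩
            rw [sig_apply_of_eq he hclb, hb', hub]
            ring
          · exact ⟨bet l m a, ⟨a, rfl⟩, by rw [sig_apply_of_ne he hc1 hc2, hub]⟩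
    · rintro ⟨x, hxB, rfl⟩
      obtain ⟨a, hx⟩ := hxB
      have hx' : x = bet l m a := hx
      subst hx'
      by_cases hc1 : ((bet l m a : ℤ) : ZMod e) = i
      · by_cases hA : a ∈ AddRows e m i l
        · refine ⟨a, ?_⟩
          show sig he i (bet l m a) = bet l' m a
          rw [sig_apply_of_eq he hc1, hbet_mem a hA]
        · have hnadd : ¬ addableRow l a := fun h => hA (mem_addRows_iff.mpr ⟨h, hc1⟩)
          have hmem1 : bet l m a + 1 ∈ betaSet l m := by
            by_contra hc
            exact hnadd ((addable_iff m).mpr hc)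
          obtain ⟨b, hb⟩ := hmem1
          have hb' : bet l m b = bet l m a + 1 := hb.symm
          have hclb : ((bet l m b : ℤ) : ZMod e) = i + 1 := by
            rw [hb']; push_cast [hc1]; ring
          have hAb : b ∉ AddRows e m i l := by
            intro h
            have := (mem_addRows_iff.mp h).2
            rw [hclb] at this
            exact add_one_ne he i this
          refine ⟨b, ?_⟩
          show sig he i (bet l m a) = bet l' m b
          rw [sig_apply_of_eq he hc1, hbet_not b hAb, hb']
      · by_cases hc2 : ((bet l m a : ℤ) : ZMod e) = i + 1
        · have hxcl : ((bet l m a - 1 : ℤ) : ZMod e) = i := cast_bet_sub_one' hc2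
          have hmem1 : bet l m a - 1 ∈ betaSet l m := by
            by_contra hc
            apply hnorem (bet l m a - 1) hxcl hc
            rw [show bet l m a - 1 + 1 = bet l m a by ring]
            exact ⟨a, rfl⟩
          obtain ⟨b, hb⟩ := hmem1
          have hb' : bet l m b = bet l m a - 1 := hb.symm
          have hnaddb : ¬ addableRow l b := by
            rw [addable_iff m]
            intro hc
            apply hc
            rw [hb', show bet l m a - 1 + 1 = bet l m a by ring]
            exact ⟨a, rfl⟩
          have hAb : b ∉ AddRows e m i l := fun h => hnaddb (mem_addRows_iff.mp h).1
          refine ⟨b, ?_⟩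
          show sig he i (bet l m a) = bet l' m b
          rw [sig_apply_of_eq_add_one he hc2, hbet_not b hAb, hb']
        · have hAa : a ∉ AddRows e m i l := fun h => hc1 (mem_addRows_iff.mp h).2
          refine ⟨a, ?_⟩
          show sig he i (bet l m a) = bet l' m a
          rw [sig_apply_of_ne he hc1 hc2, hbet_not a hAa]
  · -- removal case
    have hf := hact.2 hRem
    obtain ⟨a₀, ha₀⟩ := Set.nonempty_iff_ne_empty.mpr hRem
    obtain ⟨y, hy, hyB, hy1B⟩ := remRows_nonempty_iff.mp ⟨a₀, ha₀⟩
    have hnoadd : ∀ x : ℤ, (x : ZMod e) = i → x ∈ betaSet l m → x + 1 ∈ betaSet l m := by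
      intro x hx hxB
      by_contra hx1B
      exact no_coexist he hcore (by rw [hx, hy]) hxB hx1B hyB hy1B
    have hbet_mem : ∀ a, a ∈ RemRows e m i l → bet l' m a = bet l m a - 1 := by
      intro a ha
      have h1 : 1 ≤ l.parts a := by
        have := (mem_remRows_iff.mp ha).1
        unfold removableRow at this
        omega
      unfold bet
      rw [(hf a).1 ha, Nat.cast_sub h1]
      push_cast
      ring
    have hbet_not : ∀ a, a ∉ RemRows e m i l → bet l' m a = bet l m a := by
      intro a ha
      unfold bet
      rw [(hf a).2 ha]
    ext u
    constructor
    · rintro ⟨a, hua⟩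
      have hua' : u = bet l' m a := hua
      by_cases hR : a ∈ RemRows e m i l
      · have hcl : ((bet l m a : ℤ) : ZMod e) = i + 1 :=
          cast_bet_sub_one (mem_remRows_iff.mp hR).2
        refine ⟨bet l m a, ⟨a, rfl⟩, ?_⟩
        rw [sig_apply_of_eq_add_one he hcl, ← hbet_mem a hR, ← hua']
      · have hub : u = bet l m a := by rw [hua', hbet_not a hR]
        by_cases hc1 : ((bet l m a : ℤ) : ZMod e) = i
        · have hmem1 : bet l m a + 1 ∈ betaSet l m := hnoadd _ hc1 ⟨a, rfl⟩
          obtain ⟨b, hb⟩ := hmem1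
          have hb' : bet l m b = bet l m a + 1 := hb.symm
          have hclb : ((bet l m b : ℤ) : ZMod e) = i + 1 := by
            rw [hb']; push_cast [hc1]; ring
          refine ⟨bet l m b, ⟨b, rfl⟩, ?_⟩
          rw [sig_apply_of_eq_add_one he hclb, hb', hub]
          ring
        · by_cases hc2 : ((bet l m a : ℤ) : ZMod e) = i + 1
          · have hnrem : ¬ removableRow l a := by
              intro h
              exact hR (mem_remRows_iff.mpr ⟨h, cast_bet_sub_one' hc2⟩)
            have hmem1 : bet l m a - 1 ∈ betaSet l m := by
              by_contra hc
              exact hnrem ((removable_iff m).mpr hc)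
            obtain ⟨b, hb⟩ := hmem1
            have hb' : bet l m b = bet l m a - 1 := hb.symm
            have hclb : ((bet l m b : ℤ) : ZMod e) = i := by
              rw [hb']; exact cast_bet_sub_one' hc2
            refine ⟨bet l m b, ⟨b, rfl⟩, ?_⟩
            rw [sig_apply_of_eq he hclb, hb', hub]
            ring
          · exact ⟨bet l m a, ⟨a, rfl⟩, by rw [sig_apply_of_ne he hc1 hc2, hub]⟩
    · rintro ⟨x, hxB, rfl⟩
      obtain ⟨a, hx⟩ := hxB
      have hx' : x = bet l m a := hx
      subst hx'
      by_cases hc1 : ((bet l m a : ℤ) : ZMod e) = i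
      · have hmem1 : bet l m a + 1 ∈ betaSet l m := hnoadd _ hc1 ⟨a, rfl⟩
        obtain ⟨b, hb⟩ := hmem1
        have hb' : bet l m b = bet l m a + 1 := hb.symm
        have hnremb : ¬ removableRow l b := by
          rw [removable_iff m]
          intro hc
          apply hc
          rw [hb', show bet l m a + 1 - 1 = bet l m a by ring]
          exact ⟨a, rfl⟩
        have hRb : b ∉ RemRows e m i l := fun h => hnremb (mem_remRows_iff.mp h).1
        refine ⟨b, ?_⟩
        show sig he i (bet l m a) = bet l' m b
        rw [sig_apply_of_eq he hc1, hbet_not b hRb, hb']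
      · by_cases hc2 : ((bet l m a : ℤ) : ZMod e) = i + 1
        · by_cases hR : a ∈ RemRows e m i l
          · refine ⟨a, ?_⟩
            show sig he i (bet l m a) = bet l' m a
            rw [sig_apply_of_eq_add_one he hc2, hbet_mem a hR]
          · have hnrem : ¬ removableRow l a := by
              intro h
              exact hR (mem_remRows_iff.mpr ⟨h, cast_bet_sub_one' hc2⟩)
            have hmem1 : bet l m a - 1 ∈ betaSet l m := by
              by_contra hc
              exact hnrem ((removable_iff m).mpr hc)
            obtain ⟨b, hb⟩ := hmem1
            have hb' : bet l m b = bet l m a - 1 := hb.symm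
            have hRb : b ∉ RemRows e m i l := by
              intro h
              have hres := (mem_remRows_iff.mp h).2
              have hcb : ((bet l m b : ℤ) : ZMod e) = i := by
                rw [hb']; exact cast_bet_sub_one' hc2
              have : ((bet l m b - 1 : ℤ) : ZMod e) = i - 1 := by
                push_cast [hcb]
                ring
              rw [this] at hres
              exact sub_one_ne he i hres
            refine ⟨b, ?_⟩
            show sig he i (bet l m a) = bet l' m b
            rw [sig_apply_of_eq_add_one he hc2, hbet_not b hRb, hb']
        · have hRa : a ∉ RemRows e m i l := by
            intro h
            exact hc2 (cast_bet_sub_one (mem_remRows_iff.mp h).2)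
          refine ⟨a, ?_⟩
          show sig he i (bet l m a) = bet l' m a
          rw [sig_apply_of_ne he hc1 hc2, hbet_not a hRa]

end Prop44
namespace Prop44

open CoxeterSystem List

variable {e : ℕ}

lemma betaSet_empty (m : ℤ) : betaSet emptyPartition m = BmSet m := by
  ext x
  constructor
  · rintro ⟨k, hk⟩
    have : x = m - k := by
      rw [hk]; show ((0 : ℕ) : ℤ) + m - k = m - k; push_cast; ring
    show x ≤ m
    omega
  · intro hx
    refine ⟨(m - x).toNat, ?_⟩
    show x = ((0 : ℕ) : ℤ) + m - (m - x).toNat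
    have : ((m - x).toNat : ℤ) = m - x := Int.toNat_of_nonneg (by exact sub_nonneg.mpr hx)
    push_cast
    omega

lemma BSet_closed (he : 2 ≤ e) (m : ℤ) (g : (affineA e).Group) :
    ∀ x ∈ BSet he m g, x - (e : ℤ) ∈ BSet he m g := by
  intro x hx
  rw [mem_BSet_iff] at hx ⊢
  have paff : IsAff e (rho he g⁻¹) := isAff_rho he g⁻¹
  have h0 := isAff_zsmul paff (-1) x
  rw [show x + (-1) * (e : ℤ) = x - e by ring] at h0
  omega

lemma applies_betaSet (he : 2 ≤ e) (m : ℤ) :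
    ∀ (ω : List (ZMod e)) (l : CorePartition), Applies e m ω emptyPartition l →
      betaSet l m = BSet he m ((affineACS e).wordProd ω) := by
  intro ω
  induction ω with
  | nil =>
      intro l h
      have hl : l = emptyPartition := h
      subst hl
      rw [(affineACS e).wordProd_nil, BSet_one, betaSet_empty]
  | cons i ω ih =>
      intro l h
      obtain ⟨l'', h1, h2⟩ := h
      have hIH := ih l'' h1
      have hcore : ∀ x ∈ betaSet l'' m, x - (e : ℤ) ∈ betaSet l'' m := by
        rw [hIH]
        exact BSet_closed he m _
      rw [(affineACS e).wordProd_cons, BSet_simple_mul, ← hIH,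
        siAct_betaSet he hcore h2]

open scoped Classical in
/-- Remove all removable `i`-nodes. -/
noncomputable def stepRem (e : ℕ) (m : ℤ) (i : ZMod e) (l : CorePartition) : CorePartition where
  parts := fun a => if a ∈ RemRows e m i l then l.parts a - 1 else l.parts a
  antitone := by
    intro k
    by_cases h1 : (k + 1) ∈ RemRows e m i l <;> by_cases h2 : k ∈ RemRows e m i l <;>
      simp only [if_pos, if_neg, h1, h2, if_true, if_false]
    · have := l.antitone k; omega
    · have := l.antitone k; omega
    · have hrem : removableRow l k := (mem_remRows_iff.mp h2).1
      unfold removableRow at hrem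
      omega
    · exact l.antitone k
  eventually_zero := by
    obtain ⟨N, hN⟩ := l.eventually_zero
    refine ⟨N, fun k hk => ?_⟩
    have := hN k hk
    show (if k ∈ RemRows e m i l then l.parts k - 1 else l.parts k) = 0
    split_ifs <;> omega

open scoped Classical in
lemma stepRem_parts (e : ℕ) (m : ℤ) (i : ZMod e) (l : CorePartition) (a : ℕ) :
    (stepRem e m i l).parts a = if a ∈ RemRows e m i l then l.parts a - 1 else l.parts a := rfl

lemma siAct_stepRem {m : ℤ} {i : ZMod e} {l : CorePartition} (hne : RemRows e m i l ≠ ∅) :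
    siAct e m i l (stepRem e m i l) := by
  constructor
  · intro h
    exact absurd h hne
  · intro _ a
    constructor
    · intro ha
      rw [stepRem_parts, if_pos ha]
    · intro ha
      rw [stepRem_parts, if_neg ha]

lemma lemmaL1 {m : ℤ} {i : ZMod e} {lam mu : CorePartition}
    (hsub : ∀ k, lam.parts k ≤ mu.parts k)
    (hbad : ¬ ∀ k, lam.parts k ≤ (stepRem e m i mu).parts k) :
    ∃ a, a ∈ RemRows e m i lam := by
  push_neg at hbad
  obtain ⟨a, ha⟩ := hbad
  rw [stepRem_parts] at ha
  by_cases hR : a ∈ RemRows e m i mu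
  · rw [if_pos hR] at ha
    obtain ⟨hrem, hres⟩ := mem_remRows_iff.mp hR
    unfold removableRow at hrem
    have heq : lam.parts a = mu.parts a := by
      have := hsub a
      omega
    refine ⟨a, mem_remRows_iff.mpr ⟨?_, ?_⟩⟩
    · unfold removableRow
      have h1 := hsub (a + 1)
      omega
    · rw [show bet lam m a = bet mu m a by unfold bet; rw [heq]]
      exact hres
  · rw [if_neg hR] at ha
    have := hsub a
    omega

lemma lemmaL2 {m : ℤ} {i : ZMod e} {lam mu : CorePartition}
    (hsub : ∀ k, lam.parts k ≤ mu.parts k) :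
    ∀ k, (stepRem e m i lam).parts k ≤ (stepRem e m i mu).parts k := by
  intro b
  rw [stepRem_parts, stepRem_parts]
  by_cases h1 : b ∈ RemRows e m i lam
  · rw [if_pos h1]
    have := hsub b
    split_ifs <;> omega
  · rw [if_neg h1]
    by_cases h2 : b ∈ RemRows e m i mu
    · rw [if_pos h2]
      obtain ⟨hrem, hres⟩ := mem_remRows_iff.mp h2
      unfold removableRow at hrem
      by_contra hc
      push_neg at hc
      have heq : lam.parts b = mu.parts b := by
        have := hsub b
        omega
      apply h1
      refine mem_remRows_iff.mpr ⟨?_, ?_⟩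
      · unfold removableRow
        have := hsub (b + 1)
        omega
      · rw [show bet lam m b = bet mu m b by unfold bet; rw [heq]]
        exact hres
    · rw [if_neg h2]
      exact hsub b

theorem main_ind (he : 2 ≤ e) (m : ℤ) :
    ∀ (n : ℕ) (u v : (affineA e).Group), IsDistinguished e m u → IsDistinguished e m v →
      ∀ (lam mu : CorePartition), betaSet lam m = BSet he m u → betaSet mu m = BSet he m v →
      (∀ k, lam.parts k ≤ mu.parts k) → (affineACS e).length v = n → BruhatLE e u v := by
  intro n
  induction n using Nat.strong_induction_on with
  | _ n IH =>
  intro u v hu hv lam mu hL hM hsub hlenv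
  by_cases hu1 : u = 1
  · subst hu1
    obtain ⟨ω, hω1, hω2⟩ := (affineACS e).exists_reduced_word v
    exact ⟨ω, hω2.symm, by rw [hω2]; unfold CoxeterSystem.IsReduced at hω1; exact hω1.symm, [], List.nil_sublist ω, (affineACS e).wordProd_nil⟩
  · -- u ≠ 1 : lam is nonempty, hence so are mu and v
    obtain ⟨i₀, hi₀⟩ := (affineACS e).exists_leftDescent_of_ne_one hu1
    obtain ⟨x₀, hx₀c, hx₀n, hx₀1⟩ := rem_of_descentL he m hu hi₀
    obtain ⟨a₀, ha₀⟩ := remRows_nonempty_iff.mpr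
      ⟨x₀, hx₀c, by rw [hL]; exact hx₀n, by rw [hL]; exact hx₀1⟩
    have hlampos : 1 ≤ lam.parts a₀ := by
      have := (mem_remRows_iff.mp ha₀).1
      unfold removableRow at this
      omega
    have hv1 : v ≠ 1 := by
      intro h
      subst h
      rw [BSet_one] at hM
      have h1 : bet mu m 0 ∈ betaSet mu m := ⟨0, rfl⟩
      rw [hM] at h1
      have h2 : (mu.parts 0 : ℤ) + m - 0 ≤ m := h1
      have h3 := parts_anti mu (Nat.zero_le a₀)
      have h4 := hsub a₀
      omega
    obtain ⟨i, hi⟩ := (affineACS e).exists_leftDescent_of_ne_one hv1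
    obtain ⟨x₁, hx₁c, hx₁n, hx₁1⟩ := rem_of_descentL he m hv hi
    have hRemMu : RemRows e m i mu ≠ ∅ := by
      rw [← Set.nonempty_iff_ne_empty]
      exact remRows_nonempty_iff.mpr ⟨x₁, hx₁c, by rw [hM]; exact hx₁n, by rw [hM]; exact hx₁1⟩
    have hv' : IsDistinguished e m ((affineACS e).simple i * v) := dist_simple_mul he m hv hi
    have hlen' : (affineACS e).length ((affineACS e).simple i * v) + 1 = (affineACS e).length v := by
      rcases (affineACS e).length_simple_mul v i with h | h
      · exfalso; unfold CoxeterSystem.IsLeftDescent at hi; omega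
      · exact h
    have hmucore : ∀ x ∈ betaSet mu m, x - (e : ℤ) ∈ betaSet mu m := by
      rw [hM]; exact BSet_closed he m v
    have hM' : betaSet (stepRem e m i mu) m = BSet he m ((affineACS e).simple i * v) := by
      rw [siAct_betaSet he hmucore (siAct_stepRem hRemMu), hM, BSet_simple_mul]
    by_cases hss : ∀ k, lam.parts k ≤ (stepRem e m i mu).parts k
    · obtain ⟨ω, hp, hlen, ω'', hsub'', hp''⟩ :=
        IH ((affineACS e).length ((affineACS e).simple i * v)) (by omega) u ((affineACS e).simple i * v) hu hv' lam
          (stepRem e m i mu) hL hM' hss rfl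
      refine ⟨i :: ω, ?_, ?_, ω'', hsub''.cons i, hp''⟩
      · rw [(affineACS e).wordProd_cons, hp, (affineACS e).simple_mul_simple_cancel_left]
      · rw [List.length_cons, hlen]
        omega
    · obtain ⟨a₁, ha₁⟩ := lemmaL1 hsub hss
      obtain ⟨x₂, hx₂c, hx₂n, hx₂1⟩ := remRows_nonempty_iff.mp ⟨a₁, ha₁⟩
      have hdescu : (affineACS e).length ((affineACS e).simple i * u) < (affineACS e).length u := by
        apply descentL_of_rem he m hx₂c
        · rw [← hL]; exact hx₂n
        · rw [← hL]; exact hx₂1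
      have hu' : IsDistinguished e m ((affineACS e).simple i * u) := dist_simple_mul he m hu hdescu
      have hlamcore : ∀ x ∈ betaSet lam m, x - (e : ℤ) ∈ betaSet lam m := by
        rw [hL]; exact BSet_closed he m u
      have hRemLam : RemRows e m i lam ≠ ∅ := by
        rw [← Set.nonempty_iff_ne_empty]
        exact ⟨a₁, ha₁⟩
      have hL' : betaSet (stepRem e m i lam) m = BSet he m ((affineACS e).simple i * u) := by
        rw [siAct_betaSet he hlamcore (siAct_stepRem hRemLam), hL, BSet_simple_mul]
      obtain ⟨ω, hp, hlen, ω'', hsub'', hp''⟩ :=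
        IH ((affineACS e).length ((affineACS e).simple i * v)) (by omega) ((affineACS e).simple i * u) ((affineACS e).simple i * v)
          hu' hv' (stepRem e m i lam) (stepRem e m i mu) hL' hM' (lemmaL2 hsub) rfl
      refine ⟨i :: ω, ?_, ?_, i :: ω'', hsub''.cons₂ i, ?_⟩
      · rw [(affineACS e).wordProd_cons, hp, (affineACS e).simple_mul_simple_cancel_left]
      · rw [List.length_cons, hlen]
        omega
      · rw [(affineACS e).wordProd_cons, hp'', (affineACS e).simple_mul_simple_cancel_left]

end Prop44
/-- Proposition 4.4(2): if `u, v` are distinguished coset representatives of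
`W/W_m` and the `e`-cores `λ = u∅_m`, `μ = v∅_m` satisfy `λ ⊆ μ`, then
`u ≤ v` in Bruhat order. -/
theorem contained_implies_bruhat_le (e : ℕ) (he : 2 ≤ e) (m : ℤ)
    (u v : (affineA e).Group)
    (hu : IsDistinguished e m u) (hv : IsDistinguished e m v)
    (wu wv : List (ZMod e))
    (hwu : (affineACS e).wordProd wu = u)
    (hwv : (affineACS e).wordProd wv = v)
    (lam mu : CorePartition)
    (hlam : Applies e m wu emptyPartition lam)
    (hmu : Applies e m wv emptyPartition mu)
    (hsub : ∀ k, lam.parts k ≤ mu.parts k) :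
    BruhatLE e u v := by
  have hL : betaSet lam m = Prop44.BSet he m u := by
    rw [← hwu]
    exact Prop44.applies_betaSet he m wu lam hlam
  have hM : betaSet mu m = Prop44.BSet he m v := by
    rw [← hwv]
    exact Prop44.applies_betaSet he m wv mu hmu
  exact Prop44.main_ind he m ((affineACS e).length v) u v hu hv lam mu hL hM hsub rfl
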